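/- Lipschitz property for the SIS process (Lemma 4B): let h > 0 and μ > 0, let A be a random edge-timer vector whose components (A(e))_{e∈E(G)} are independent exponential rate-1 random variables, and let B be a random recovery-timer vector whose components (B(j))_{j∈V} are independent exponential rate-μ random variables, with A and B independent of each other. Define f(x,(a,b)) = (g(x,(a,b)) − x)/h, a vector in ℝ^V. Then for all states x and z, E[‖f(x,(A,B)) − f(z,(A,B))‖₁] ≤ (k + μ)·‖x − z‖₁. -/

import Mathlib

/-!
Run the two chains from `x` and `z` with the same timers. At a vertex `j` they can disagree
after one step only if `x j ≠ z j` and the recovery timer of `j` rings, or if some edge `jj'`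
rings whose far end `j'` could transmit to `j` in one run but not in the other (`Charged`).
A timer of rate `r` rings within time `h` with probability `1 - exp (-r h) ≤ r h`, so linearity
of expectation bounds the left-hand side by `μ ‖x - z‖₁` plus the number of charged directed
edges. The two directions of an edge are charged at most as often as the edge has endpoints
where `x` and `z` differ, so by the degree bound there are at most `k ‖x - z‖₁` of them.
-/

open MeasureTheory ProbabilityTheory Real

/-- View a Boolean infection state as a real number (`true ↦ 1`, `false ↦ 0`). -/
def boolToR (b : Bool) : ℝ := if b then 1 else 0

open Classical in
/-- One step of the SIS discrete-time simulation (DTS): a susceptible node `j` becomes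
infected iff some infected neighbor's edge timer fires within time `h`; an infected node
`j` recovers iff its recovery timer fires within time `h`. -/
noncomputable def sisDTS {V : Type*} (G : SimpleGraph V) (h : ℝ) (x : V → Bool)
    (a : G.edgeSet → ℝ) (b : V → ℝ) : V → Bool := fun j =>
  if x j = true then (if b j ≤ h then false else true)
  else
    if ∃ j', ∃ hadj : G.Adj j j',
        x j' = true ∧ a ⟨s(j, j'), (SimpleGraph.mem_edgeSet G).mpr hadj⟩ ≤ h
    then true else false

/-- `f(x,(a,b)) = (g(x,(a,b)) - x)/h`, the incremental rate of change of the SIS DTS, as a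
vector in `ℝ^V`. -/
noncomputable def sisF {V : Type*} (G : SimpleGraph V) (h : ℝ) (x : V → Bool)
    (a : G.edgeSet → ℝ) (b : V → ℝ) : V → ℝ := fun j =>
  (boolToR (sisDTS G h x a b j) - boolToR (x j)) / h

open Finset

lemma one_le_sum_ite {ι : Type*} [Fintype ι] {p : ι → Prop} [DecidablePred p] {i : ι}
    (hi : p i) : (1 : ℝ) ≤ ∑ i, if p i then 1 else 0 := by
  calc (1 : ℝ) = if p i then 1 else 0 := (if_pos hi).symm
    _ ≤ ∑ i, if p i then 1 else 0 :=
      single_le_sum (f := fun i => if p i then (1 : ℝ) else 0)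
        (fun _ _ => by positivity) (mem_univ i)

lemma ite_le_of_imp {P : Prop} [Decidable P] {N : ℝ} (hN : 0 ≤ N) (hP : P → 1 ≤ N) :
    (if P then 1 else 0) ≤ N := by
  split_ifs with h
  exacts [hP h, hN]

lemma abs_ite_sub_ite_le {P Q : Prop} [Decidable P] [Decidable Q] {N : ℝ} (hN : 0 ≤ N)
    (hPQ : P → ¬Q → 1 ≤ N) (hQP : Q → ¬P → 1 ≤ N) :
    |(if P then 1 else 0) - (if Q then 1 else 0)| ≤ N := by
  by_cases hP : P <;> by_cases hQ : Q <;> simp [hP, hQ, hPQ, hQP, hN]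

lemma boolToR_true : boolToR true = 1 := rfl

lemma boolToR_false : boolToR false = 0 := rfl

lemma abs_boolToR_sub (u v : Bool) : |boolToR u - boolToR v| = if u = v then 0 else 1 := by
  cases u <;> cases v <;> norm_num [boolToR]

section

variable {V : Type*}

def EdgeFires (G : SimpleGraph V) (h : ℝ) (a : G.edgeSet → ℝ) (j j' : V) : Prop :=
  ∃ hadj : G.Adj j j', a ⟨s(j, j'), (SimpleGraph.mem_edgeSet G).mpr hadj⟩ ≤ h

/-- A ring of the edge `jj'` can make the runs from `x` and from `z` disagree at `j`. -/
def Charged (x z : V → Bool) (j j' : V) : Prop :=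
  (x j = false ∧ z j = false ∧ x j' ≠ z j') ∨
    (x j ≠ z j ∧ (x j' = true ∨ z j' = true))

lemma boolToR_sisDTS_of_true (G : SimpleGraph V) (h : ℝ) (x : V → Bool) (a : G.edgeSet → ℝ)
    (b : V → ℝ) {j : V} (hj : x j = true) :
    boolToR (sisDTS G h x a b j) = 1 - if b j ≤ h then 1 else 0 := by
  by_cases hb : b j ≤ h <;> simp [sisDTS, boolToR, hj, hb]

open Classical in
lemma boolToR_sisDTS_of_false (G : SimpleGraph V) (h : ℝ) (x : V → Bool) (a : G.edgeSet → ℝ)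
    (b : V → ℝ) {j : V} (hj : x j = false) :
    boolToR (sisDTS G h x a b j) =
      if ∃ j', x j' = true ∧ EdgeFires G h a j j' then 1 else 0 := by
  have hE : (∃ j', ∃ hadj : G.Adj j j',
      x j' = true ∧ a ⟨s(j, j'), (SimpleGraph.mem_edgeSet G).mpr hadj⟩ ≤ h) ↔
      ∃ j', x j' = true ∧ EdgeFires G h a j j' := by
    simp only [EdgeFires, exists_and_left]
  simp only [sisDTS, hj, boolToR, Bool.false_eq_true, if_false, hE]
  split_ifs <;> simp_all

open Classical in
lemma abs_sisDTS_increment_sub_le [Fintype V] (G : SimpleGraph V) (h : ℝ) (x z : V → Bool)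
    (a : G.edgeSet → ℝ) (b : V → ℝ) (j : V) :
    |(boolToR (sisDTS G h x a b j) - boolToR (x j)) -
        (boolToR (sisDTS G h z a b j) - boolToR (z j))| ≤
      (if x j ≠ z j ∧ b j ≤ h then 1 else 0) +
        ∑ j', if Charged x z j j' ∧ EdgeFires G h a j j' then 1 else 0 := by
  set N := ∑ j', if Charged x z j j' ∧ EdgeFires G h a j j' then (1 : ℝ) else 0
  have hN : 0 ≤ N := sum_nonneg fun _ _ => by positivity
  have charge : ∀ j', EdgeFires G h a j j' → Charged x z j j' → 1 ≤ N := fun j' hf hc =>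
    one_le_sum_ite (p := fun j' => Charged x z j j' ∧ EdgeFires G h a j j') ⟨hc, hf⟩
  cases hx : x j <;> cases hz : z j
  · rw [boolToR_sisDTS_of_false G h x a b hx, boolToR_sisDTS_of_false G h z a b hz]
    rw [boolToR_false, sub_zero, sub_zero, if_neg (show ¬(false ≠ false ∧ b j ≤ h) by simp),
      zero_add]
    -- `convert` reconciles the classical and the `Fintype` decidability instances of `∃ j', _`
    convert abs_ite_sub_ite_le hN ?_ ?_
    · rintro ⟨j', hxj', hf⟩ hEz
      have hzj' : z j' = false := by simpa using fun hzj' => hEz ⟨j', hzj', hf⟩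
      exact charge j' hf (Or.inl ⟨hx, hz, by simp [hxj', hzj']⟩)
    · rintro ⟨j', hzj', hf⟩ hEx
      have hxj' : x j' = false := by simpa using fun hxj' => hEx ⟨j', hxj', hf⟩
      exact charge j' hf (Or.inl ⟨hx, hz, by simp [hxj', hzj']⟩)
  · rw [boolToR_sisDTS_of_false G h x a b hx, boolToR_sisDTS_of_true G h z a b hz]
    have hxN := @ite_le_of_imp (∃ j', x j' = true ∧ EdgeFires G h a j j') _ _ hN
      fun ⟨j', hxj', hf⟩ => charge j' hf (Or.inr ⟨by simp [hx, hz], Or.inl hxj'⟩)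
    simp only [boolToR_false, boolToR_true, ne_eq, Bool.false_eq_true, not_false_eq_true,
      true_and]
    split_ifs at hxN ⊢ <;> norm_num at hxN ⊢ <;> linarith
  · rw [boolToR_sisDTS_of_true G h x a b hx, boolToR_sisDTS_of_false G h z a b hz]
    have hzN := @ite_le_of_imp (∃ j', z j' = true ∧ EdgeFires G h a j j') _ _ hN
      fun ⟨j', hzj', hf⟩ => charge j' hf (Or.inr ⟨by simp [hx, hz], Or.inr hzj'⟩)
    simp only [boolToR_false, boolToR_true, ne_eq, Bool.true_eq_false, not_false_eq_true,
      true_and]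
    split_ifs at hzN ⊢ <;> norm_num at hzN ⊢ <;> linarith
  · rw [boolToR_sisDTS_of_true G h x a b hx, boolToR_sisDTS_of_true G h z a b hz]
    simpa using hN

open Classical in
lemma abs_sisF_sub_le [Fintype V] (G : SimpleGraph V) {h : ℝ} (h0 : 0 < h) (x z : V → Bool)
    (a : G.edgeSet → ℝ) (b : V → ℝ) (j : V) :
    |sisF G h x a b j - sisF G h z a b j| ≤
      ((if x j ≠ z j ∧ b j ≤ h then 1 else 0) +
        ∑ j', if Charged x z j j' ∧ EdgeFires G h a j j' then 1 else 0) / h := by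
  rw [sisF, sisF, ← sub_div, abs_div, abs_of_pos h0]
  gcongr
  exact abs_sisDTS_increment_sub_le G h x z a b j

open Classical in
lemma sum_adj_le_of_ncard_neighborSet_le [Fintype V] (G : SimpleGraph V) {k : ℕ}
    (hdeg : ∀ j, (G.neighborSet j).ncard ≤ k) (j : V) :
    ∑ j', (if G.Adj j j' then (1 : ℝ) else 0) ≤ k := by
  rw [sum_boole, ← Set.ncard_coe_finset]
  simpa [SimpleGraph.neighborSet] using hdeg j

open Classical in
lemma charged_add_charged_swap_le (G : SimpleGraph V) (x z : V → Bool) (j j' : V) :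
    ((if G.Adj j j' ∧ Charged x z j j' then 1 else 0) +
        if G.Adj j' j ∧ Charged x z j' j then 1 else 0 : ℝ) ≤
      (if G.Adj j j' then 1 else 0) *
        ((if x j = z j then 0 else 1) + if x j' = z j' then 0 else 1) := by
  by_cases hadj : G.Adj j j'
  · simp only [hadj, hadj.symm, true_and, Charged]
    cases x j <;> cases z j <;> cases x j' <;> cases z j' <;> norm_num
  · simp [hadj, G.adj_comm j' j]

open Classical in
lemma sum_sum_adj_charged_le [Fintype V] (G : SimpleGraph V) {k : ℕ}
    (hdeg : ∀ j, (G.neighborSet j).ncard ≤ k) (x z : V → Bool) :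
    ∑ j, ∑ j', (if G.Adj j j' ∧ Charged x z j j' then (1 : ℝ) else 0) ≤
      k * ∑ j, (if x j = z j then 0 else 1) := by
  set d : V → ℝ := fun j => if x j = z j then 0 else 1
  have hsymm : ∑ j, ∑ j', (if G.Adj j j' then (1 : ℝ) else 0) * d j' =
      ∑ j, ∑ j', (if G.Adj j j' then (1 : ℝ) else 0) * d j := by
    rw [sum_comm]
    simp only [G.adj_comm]
  calc ∑ j, ∑ j', (if G.Adj j j' ∧ Charged x z j j' then (1 : ℝ) else 0)
      = (∑ j, ∑ j', ((if G.Adj j j' ∧ Charged x z j j' then 1 else 0) +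
          if G.Adj j' j ∧ Charged x z j' j then 1 else 0)) / 2 := by
        simp only [sum_add_distrib]
        rw [sum_comm (f := fun j j' => if G.Adj j' j ∧ Charged x z j' j then (1 : ℝ) else 0)]
        ring
    _ ≤ (∑ j, ∑ j', (if G.Adj j j' then (1 : ℝ) else 0) * (d j + d j')) / 2 := by
        gcongr with j _ j' _
        exact charged_add_charged_swap_le G x z j j'
    _ = ∑ j, (∑ j', if G.Adj j j' then (1 : ℝ) else 0) * d j := by
        simp only [mul_add, sum_add_distrib, hsymm, sum_mul]
        ring
    _ ≤ ∑ j, k * d j := by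
        gcongr with j
        exact sum_adj_le_of_ncard_neighborSet_le G hdeg j
    _ = k * ∑ j, d j := (mul_sum _ _ _).symm

end

section Probability

variable {Ω : Type*} [MeasurableSpace Ω] {P : Measure Ω}

lemma measureReal_le_le_mul_of_map_eq_expMeasure {X : Ω → ℝ} {r h : ℝ} (hX : Measurable X)
    (hXdist : P.map X = expMeasure r) (hr : 0 < r) (hh : 0 ≤ h) :
    P.real {ω | X ω ≤ h} ≤ r * h := by
  have := isProbabilityMeasure_expMeasure hr
  calc P.real {ω | X ω ≤ h} = (P.map X).real (Set.Iic h) :=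
        (map_measureReal_apply hX measurableSet_Iic).symm
    _ = 1 - exp (-(r * h)) := by rw [hXdist, ← cdf_eq_real, cdf_expMeasure_eq hr, if_pos hh]
    _ ≤ r * h := by linarith [add_one_le_exp (-(r * h))]

lemma measureReal_const_and (c : Prop) [Decidable c] (q : Ω → Prop) :
    P.real {ω | c ∧ q ω} = if c then P.real {ω | q ω} else 0 := by
  split_ifs with hc <;> simp [hc]

lemma integral_ite_one_zero {p : Ω → Prop} [DecidablePred p] (hp : MeasurableSet {ω | p ω}) :
    ∫ ω, (if p ω then (1 : ℝ) else 0) ∂P = P.real {ω | p ω} := by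
  simpa [Set.indicator_apply] using integral_indicator_one (μ := P) hp

lemma integrable_ite_one_zero [IsFiniteMeasure P] {p : Ω → Prop} [DecidablePred p]
    (hp : MeasurableSet {ω | p ω}) : Integrable (fun ω => if p ω then (1 : ℝ) else 0) P := by
  refine ((integrable_const (μ := P) (1 : ℝ)).indicator hp).congr (.of_forall fun ω => ?_)
  simp [Set.indicator_apply]

lemma integrable_ite_add_sum_ite [IsFiniteMeasure P] {κ : Type*} [Fintype κ] {p : Ω → Prop}
    {q : κ → Ω → Prop} [DecidablePred p] [∀ i, DecidablePred (q i)]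
    (hp : MeasurableSet {ω | p ω}) (hq : ∀ i, MeasurableSet {ω | q i ω}) :
    Integrable (fun ω => (if p ω then (1 : ℝ) else 0) + ∑ i, if q i ω then 1 else 0) P :=
  (integrable_ite_one_zero hp).add
    (integrable_finsetSum _ fun i _ => integrable_ite_one_zero (hq i))

lemma integral_ite_add_sum_ite [IsFiniteMeasure P] {κ : Type*} [Fintype κ] {p : Ω → Prop}
    {q : κ → Ω → Prop} [DecidablePred p] [∀ i, DecidablePred (q i)]
    (hp : MeasurableSet {ω | p ω}) (hq : ∀ i, MeasurableSet {ω | q i ω}) :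
    ∫ ω, ((if p ω then (1 : ℝ) else 0) + ∑ i, if q i ω then 1 else 0) ∂P =
      P.real {ω | p ω} + ∑ i, P.real {ω | q i ω} := by
  rw [integral_add (integrable_ite_one_zero hp)
      (integrable_finsetSum _ fun i _ => integrable_ite_one_zero (hq i)),
    integral_finsetSum _ fun i _ => integrable_ite_one_zero (hq i), integral_ite_one_zero hp]
  simp only [integral_ite_one_zero (hq _)]

variable {V : Type*} (G : SimpleGraph V) {A : Ω → G.edgeSet → ℝ} {B : Ω → V → ℝ}

lemma measurableSet_edgeFires (hA : ∀ e, Measurable fun ω => A ω e) (h : ℝ) (j j' : V) :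
    MeasurableSet {ω | EdgeFires G h (A ω) j j'} := by
  by_cases hadj : G.Adj j j'
  · simpa [EdgeFires, hadj] using measurableSet_le (hA _) measurable_const
  · simp [EdgeFires, hadj]

open Classical in
lemma measureReal_charged_edgeFires_le (hA : ∀ e, Measurable fun ω => A ω e)
    (hAdist : ∀ e, P.map (fun ω => A ω e) = expMeasure 1) {h : ℝ} (hh : 0 ≤ h)
    (x z : V → Bool) (j j' : V) :
    P.real {ω | Charged x z j j' ∧ EdgeFires G h (A ω) j j'} ≤
      h * if G.Adj j j' ∧ Charged x z j j' then 1 else 0 := by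
  rw [measureReal_const_and]
  by_cases hadj : G.Adj j j'
  · have := measureReal_le_le_mul_of_map_eq_expMeasure (hA ⟨s(j, j'), G.mem_edgeSet.mpr hadj⟩)
      (hAdist _) one_pos hh
    split_ifs <;> simp_all [EdgeFires]
  · simp [EdgeFires, hadj]

lemma measureReal_recovery_le (hB : ∀ j, Measurable fun ω => B ω j) {μ : ℝ}
    (hBdist : ∀ j, P.map (fun ω => B ω j) = expMeasure μ) (hμ : 0 < μ) {h : ℝ}
    (hh : 0 ≤ h) (x z : V → Bool) (j : V) :
    P.real {ω | x j ≠ z j ∧ B ω j ≤ h} ≤ μ * h * if x j = z j then 0 else 1 := by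
  rw [measureReal_const_and]
  have := measureReal_le_le_mul_of_map_eq_expMeasure (hB j) (hBdist j) hμ hh
  split_ifs <;> simp_all

lemma integral_sum_abs_sisF_sub_le [IsFiniteMeasure P] [Fintype V]
    (hA : ∀ e, Measurable fun ω => A ω e) (hB : ∀ j, Measurable fun ω => B ω j)
    {h : ℝ} (h0 : 0 < h) (x z : V → Bool) :
    ∫ ω, ∑ j, |sisF G h x (A ω) (B ω) j - sisF G h z (A ω) (B ω) j| ∂P ≤
      ∑ j, (P.real {ω | x j ≠ z j ∧ B ω j ≤ h} +
        ∑ j', P.real {ω | Charged x z j j' ∧ EdgeFires G h (A ω) j j'}) / h := by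
  classical
  have hR (j : V) : MeasurableSet {ω | x j ≠ z j ∧ B ω j ≤ h} :=
    (MeasurableSet.const _).inter (measurableSet_le (hB j) measurable_const)
  have hE (j j' : V) : MeasurableSet {ω | Charged x z j j' ∧ EdgeFires G h (A ω) j j'} :=
    (MeasurableSet.const _).inter (measurableSet_edgeFires G hA h j j')
  have hint (j : V) := (integrable_ite_add_sum_ite (P := P) (hR j) (hE j)).div_const h
  calc ∫ ω, ∑ j, |sisF G h x (A ω) (B ω) j - sisF G h z (A ω) (B ω) j| ∂P
      ≤ ∫ ω, ∑ j, ((if x j ≠ z j ∧ B ω j ≤ h then 1 else 0) +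
          ∑ j', if Charged x z j j' ∧ EdgeFires G h (A ω) j j' then 1 else 0) / h ∂P :=
        integral_mono_of_nonneg (.of_forall fun ω => by positivity)
          (integrable_finsetSum _ fun j _ => hint j)
          (.of_forall fun ω => sum_le_sum fun j _ => abs_sisF_sub_le G h0 x z (A ω) (B ω) j)
    _ = _ := by
        rw [integral_finsetSum _ fun j _ => hint j]
        simp only [integral_div, integral_ite_add_sum_ite (hR _) (hE _)]

end Probability

theorem sis_lipschitz_general {Ω : Type*} [MeasureSpace Ω]
    [IsProbabilityMeasure (ℙ : Measure Ω)]
    {V : Type*} [Fintype V] (G : SimpleGraph V) (k : ℕ)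
    (hdeg : ∀ j : V, (G.neighborSet j).ncard ≤ k)
    (h μ : ℝ) (h0 : 0 < h) (hμ : 0 < μ)
    (A : Ω → G.edgeSet → ℝ) (B : Ω → V → ℝ)
    (hAmeas : ∀ e : G.edgeSet, Measurable fun ω => A ω e)
    (hBmeas : ∀ j : V, Measurable fun ω => B ω j)
    (hAdist : ∀ e : G.edgeSet, Measure.map (fun ω => A ω e) ℙ = expMeasure 1)
    (hBdist : ∀ j : V, Measure.map (fun ω => B ω j) ℙ = expMeasure μ)
    (x z : V → Bool) :
    ∫ ω, ∑ j : V, |sisF G h x (A ω) (B ω) j - sisF G h z (A ω) (B ω) j| ∂ℙ ≤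
      ((k : ℝ) + μ) * ∑ j : V, |boolToR (x j) - boolToR (z j)| := by
  classical
  set d : V → ℝ := fun j => if x j = z j then 0 else 1
  set c : V → V → ℝ := fun j j' => if G.Adj j j' ∧ Charged x z j j' then 1 else 0
  calc _ ≤ _ := integral_sum_abs_sisF_sub_le G hAmeas hBmeas h0 x z
    _ ≤ ∑ j, (μ * h * d j + ∑ j', h * c j j') / h := by
        gcongr with j _ j' _
        exacts [measureReal_recovery_le hBmeas hBdist hμ h0.le x z j,
          measureReal_charged_edgeFires_le G hAmeas hAdist h0.le x z j j']
    _ = μ * ∑ j, d j + ∑ j, ∑ j', c j j' := by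
        rw [mul_sum, ← sum_add_distrib]
        refine sum_congr rfl fun j _ => ?_
        rw [← mul_sum]
        field_simp
    _ ≤ (k + μ) * ∑ j, d j := by linarith [sum_sum_adj_charged_le G hdeg x z]
    _ = (k + μ) * ∑ j, |boolToR (x j) - boolToR (z j)| := by simp only [d, abs_boolToR_sub]

/-- **Lemma 4B (Lipschitz property for the SIS process).** Let `h > 0` and `μ > 0`, let the
edge timers `A(e)`, `e ∈ E(G)`, be independent exponential rate-1 random variables, and let
the recovery timers `B(j)`, `j ∈ V`, be independent exponential rate-`μ` random variables,
with `A` and `B` independent of each other (equivalently, the combined family of all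
components of `A` and `B` is independent).  Then for all states `x` and `z`,
`E[‖f(x,(A,B)) - f(z,(A,B))‖₁] ≤ (k + μ) * ‖x - z‖₁`. -/
theorem sis_lipschitz {Ω : Type*} [MeasureSpace Ω]
    [IsProbabilityMeasure (ℙ : Measure Ω)]
    {V : Type*} [Fintype V] (G : SimpleGraph V) (k : ℕ)
    (hdeg : ∀ j : V, (G.neighborSet j).ncard ≤ k)
    (h μ : ℝ) (h0 : 0 < h) (hμ : 0 < μ)
    (A : Ω → G.edgeSet → ℝ) (B : Ω → V → ℝ)
    (hAmeas : ∀ e : G.edgeSet, Measurable fun ω => A ω e)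
    (hBmeas : ∀ j : V, Measurable fun ω => B ω j)
    (hindep : iIndepFun
      (fun (s : G.edgeSet ⊕ V) ω => Sum.elim (fun e => A ω e) (fun j => B ω j) s) ℙ)
    (hAdist : ∀ e : G.edgeSet, Measure.map (fun ω => A ω e) ℙ = expMeasure 1)
    (hBdist : ∀ j : V, Measure.map (fun ω => B ω j) ℙ = expMeasure μ)
    (x z : V → Bool) :
    ∫ ω, ∑ j : V, |sisF G h x (A ω) (B ω) j - sisF G h z (A ω) (B ω) j| ∂ℙ ≤
      ((k : ℝ) + μ) * ∑ j : V, |boolToR (x j) - boolToR (z j)| :=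
  sis_lipschitz_general G k hdeg h μ h0 hμ A B hAmeas hBmeas hAdist hBdist x z
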